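/- For all a, b, c, d > 0, μ₁, μ₂ ∈ ℝ and every fixed x₁ ∈ ℝ, integrating the 3-dimensional Full Rosenbrock kernel over x₂ and x₃ yields ∫_ℝ ∫_ℝ exp(−a(x₁−μ₁)² − b(x₂−x₁²)² − c(x₂−μ₂)² − d(x₃−x₂²)²) dx₃ dx₂ = (π/√(d(b+c))) · exp(−a(x₁−μ₁)² − (bc/(b+c))·(x₁²−μ₂)²). Consequently the x₁-marginal of the 3-dimensional Full Rosenbrock density is no longer a Gaussian kernel in x₁, since it acquires the extra factor exp(−(bc/(b+c))(x₁²−μ₂)²). -/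

import Mathlib

/-!
Integrating out `x₃` is a shifted Gaussian integral in `x₃ - x₂²`, contributing `√(π/d)` whatever
`x₂` is. What remains in `x₂` is a product of two Gaussians centred at `x₁²` and `μ₂`; completing
the square turns it into one Gaussian of precision `b + c`, contributing `√(π/(b+c))`, times the
factor `exp (-(bc/(b+c)) (x₁² - μ₂)²)`.
-/

open MeasureTheory Real

theorem integral_exp_neg_mul_sub_sq (t s : ℝ) :
    ∫ x : ℝ, exp (-t * (x - s) ^ 2) = √(π / t) := by
  rw [integral_sub_right_eq_self (fun x => exp (-t * x ^ 2)) s, integral_gaussian]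

theorem neg_mul_sub_sq_sub_mul_sub_sq {b c : ℝ} (hbc : b + c ≠ 0) (p q x : ℝ) :
    -b * (x - p) ^ 2 - c * (x - q) ^ 2
      = -(b + c) * (x - (b * p + c * q) / (b + c)) ^ 2 - b * c / (b + c) * (p - q) ^ 2 := by
  field_simp
  ring

theorem integral_exp_neg_mul_sub_sq_sub_mul_sub_sq {b c : ℝ} (hbc : b + c ≠ 0) (p q : ℝ) :
    ∫ x : ℝ, exp (-b * (x - p) ^ 2 - c * (x - q) ^ 2)
      = √(π / (b + c)) * exp (-(b * c / (b + c)) * (p - q) ^ 2) := by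
  simp_rw [neg_mul_sub_sq_sub_mul_sub_sq hbc, sub_eq_add_neg _ (_ * _ : ℝ), exp_add,
    integral_mul_const, integral_exp_neg_mul_sub_sq, neg_mul]

theorem sqrt_pi_div_mul_sqrt_pi_div (t : ℝ) {s : ℝ} (hs : 0 ≤ s) :
    √(π / t) * √(π / s) = π / √(t * s) := by
  rw [sqrt_div pi_pos.le, sqrt_div pi_pos.le, sqrt_mul' t hs, div_mul_div_comm,
    mul_self_sqrt pi_pos.le]

theorem fullRosenbrock3d_integrate_x2_x3_general (a b c d μ₁ μ₂ : ℝ)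
    (hb : 0 < b) (hc : 0 < c) (x₁ : ℝ) :
    ∫ x₂ : ℝ, ∫ x₃ : ℝ,
        Real.exp (-a * (x₁ - μ₁) ^ 2 - b * (x₂ - x₁ ^ 2) ^ 2
          - c * (x₂ - μ₂) ^ 2 - d * (x₃ - x₂ ^ 2) ^ 2)
      = (π / Real.sqrt (d * (b + c))) *
          Real.exp (-a * (x₁ - μ₁) ^ 2 - (b * c / (b + c)) * (x₁ ^ 2 - μ₂) ^ 2) := by
  have hbc : 0 < b + c := add_pos hb hc
  have integral_x₃ : ∀ x₂ : ℝ, ∫ x₃ : ℝ,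
      exp (-a * (x₁ - μ₁) ^ 2 - b * (x₂ - x₁ ^ 2) ^ 2
        - c * (x₂ - μ₂) ^ 2 - d * (x₃ - x₂ ^ 2) ^ 2)
      = exp (-a * (x₁ - μ₁) ^ 2) * √(π / d) *
          exp (-b * (x₂ - x₁ ^ 2) ^ 2 - c * (x₂ - μ₂) ^ 2) := by
    intro x₂
    have split : ∀ x₃ : ℝ, exp (-a * (x₁ - μ₁) ^ 2 - b * (x₂ - x₁ ^ 2) ^ 2
        - c * (x₂ - μ₂) ^ 2 - d * (x₃ - x₂ ^ 2) ^ 2)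
        = exp (-a * (x₁ - μ₁) ^ 2) * exp (-b * (x₂ - x₁ ^ 2) ^ 2 - c * (x₂ - μ₂) ^ 2)
          * exp (-d * (x₃ - x₂ ^ 2) ^ 2) := fun x₃ => by
      rw [← exp_add, ← exp_add]; ring_nf
    simp_rw [split, integral_const_mul, integral_exp_neg_mul_sub_sq]
    ring
  simp_rw [integral_x₃, integral_const_mul,
    integral_exp_neg_mul_sub_sq_sub_mul_sub_sq hbc.ne', sub_eq_add_neg (-a * _), ← neg_mul,
    exp_add, ← sqrt_pi_div_mul_sqrt_pi_div d hbc.le]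
  ring

/-- Integrating the 3-d Full Rosenbrock kernel over `x₂` and `x₃`: the `x₁`-marginal
kernel acquires the extra non-Gaussian factor `exp (-(bc/(b+c)) (x₁² - μ₂)²)`. -/
theorem fullRosenbrock3d_integrate_x2_x3 (a b c d μ₁ μ₂ : ℝ)
    (ha : 0 < a) (hb : 0 < b) (hc : 0 < c) (hd : 0 < d) (x₁ : ℝ) :
    ∫ x₂ : ℝ, ∫ x₃ : ℝ,
        Real.exp (-a * (x₁ - μ₁) ^ 2 - b * (x₂ - x₁ ^ 2) ^ 2
          - c * (x₂ - μ₂) ^ 2 - d * (x₃ - x₂ ^ 2) ^ 2)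
      = (π / Real.sqrt (d * (b + c))) *
          Real.exp (-a * (x₁ - μ₁) ^ 2 - (b * c / (b + c)) * (x₁ ^ 2 - μ₂) ^ 2) :=
  fullRosenbrock3d_integrate_x2_x3_general a b c d μ₁ μ₂ hb hc x₁
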